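/- arXiv:2502.13684 — 2 statements merged into one kernel-verified Lean document; each statement's English description precedes it below -/
import Mathlib

section
/- If f ∈ L¹(ℝⁿ) and the light ray transform Lf(x,θ) = ∫_ℝ f(x+tθ) dt vanishes for all x ∈ ℝⁿ and all θ = (θ',θ'') with |θ'| = |θ''| = 1, then f = 0 almost everywhere. -/
/-!
If `ξ = (ξ', ξ'')` is a frequency, choose unit vectors `θ' ⊥ ξ'` and `θ'' ⊥ ξ''`, possible because
both factors have dimension at least two. Then `θ = (θ', θ'')` is a light-like direction
orthogonal to `ξ`, the character `x ↦ e^{-2πi⟪x, ξ⟫}` is constant along the lines in direction `θ`,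
and so `f̂(ξ)` is an integral of line integrals of `f` in direction `θ`, all of which vanish
(Fourier slice theorem). Hence `f̂ = 0`, and `f = 0` almost everywhere by injectivity of the
Fourier transform on `L¹`.

To integrate over the lines parallel to `θ` without parametrising `θ^⊥`, weight the line through
`x` by `w (ℓ x)` for a functional with `ℓ θ = 1`: the shear `(t, x) ↦ (t, x + t θ)` preserves
`dt ⊗ μ` and turns `∫ w (ℓ x) ∫ f (x + t θ) dt dμ` into `(∫ w) ∫ f dμ`.
-/

open MeasureTheory
open scoped RealInnerProductSpace FourierTransform SchwartzMap

section LineIntegral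

variable {V E : Type*} [NormedAddCommGroup V] [NormedSpace ℝ V] [MeasurableSpace V]
  [BorelSpace V] [SecondCountableTopology V] [NormedAddCommGroup E] [NormedSpace ℝ E]
  {μ : Measure V} [SFinite μ] [μ.IsAddRightInvariant]

theorem measurePreserving_prod_add_smul (θ : V) :
    MeasurePreserving (fun p : ℝ × V ↦ (p.1, p.2 + p.1 • θ))
      ((volume : Measure ℝ).prod μ) ((volume : Measure ℝ).prod μ) :=
  (MeasurePreserving.id volume).skew_product (by fun_prop)
    (.of_forall fun t ↦ (measurePreserving_add_right μ (t • θ)).map_eq)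

theorem integral_comp_smul_lineIntegral [CompleteSpace E] {w : ℝ → ℝ} (hwc : Continuous w)
    (hw : Integrable w) {ℓ : V →L[ℝ] ℝ} {θ : V} (hθ : ℓ θ = 1) {h : V → E}
    (hh : Integrable h μ) :
    ∫ x, w (ℓ x) • (∫ t : ℝ, h (x + t • θ)) ∂μ = (∫ s, w s) • ∫ x, h x ∂μ := by
  set S : ℝ × V → ℝ × V := fun p ↦ (p.1, p.2 + p.1 • θ)
  have hS : MeasurePreserving S (volume.prod μ) (volume.prod μ) :=
    measurePreserving_prod_add_smul θ
  set G : ℝ × V → E := fun p ↦ w (ℓ p.2 - p.1) • h p.2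
  have hG_meas : AEStronglyMeasurable G (volume.prod μ) :=
    (hwc.comp (by fun_prop)).aestronglyMeasurable.smul hh.aestronglyMeasurable.comp_snd
  have hG : Integrable G (volume.prod μ) := by
    refine (integrable_prod_iff' hG_meas).2 ⟨.of_forall fun y ↦ ?_, ?_⟩
    · exact (hw.comp_sub_left (ℓ y)).smul_const (h y)
    · simp_rw [G, norm_smul, integral_mul_const, integral_sub_left_eq_self (fun s ↦ ‖w s‖)]
      exact hh.norm.const_mul _
  have hGS : G ∘ S = fun p ↦ w (ℓ p.2) • h (p.2 + p.1 • θ) := by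
    ext p; simp [G, S, hθ]
  calc ∫ x, w (ℓ x) • (∫ t : ℝ, h (x + t • θ)) ∂μ
      = ∫ x, (∫ t : ℝ, (G ∘ S) (t, x)) ∂μ := by simp_rw [hGS, integral_smul]
    _ = ∫ p, (G ∘ S) p ∂(volume.prod μ) :=
        (integral_prod_symm _ ((hS.integrable_comp hG_meas).2 hG)).symm
    _ = ∫ p, G p ∂(volume.prod μ) := by
        conv_rhs => rw [← hS.map_eq]
        exact (integral_map hS.aemeasurable (by rwa [hS.map_eq])).symm
    _ = ∫ y, (∫ t : ℝ, G (t, y)) ∂μ := integral_prod_symm G hG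
    _ = (∫ s, w s) • ∫ x, h x ∂μ := by
        simp only [G, integral_smul_const, integral_sub_left_eq_self w, integral_smul]

theorem integral_eq_zero_of_lineIntegral_eq_zero [CompleteSpace E] {θ : V} (hθ : θ ≠ 0)
    {h : V → E} (hh : Integrable h μ) (hline : ∀ x, ∫ t : ℝ, h (x + t • θ) = 0) :
    ∫ x, h x ∂μ = 0 := by
  obtain ⟨ℓ, hℓ⟩ := SeparatingDual.exists_eq_one (R := ℝ) hθ
  have hgauss := integral_comp_smul_lineIntegral (w := fun s ↦ Real.exp (-s ^ 2))
    (by fun_prop) (by simpa using integrable_exp_neg_mul_sq one_pos) hℓ hh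
  have hπ : ∫ s, Real.exp (-s ^ 2) = √Real.pi := by simpa using integral_gaussian 1
  simp_rw [hline, smul_zero, integral_zero, hπ] at hgauss
  exact (smul_eq_zero.1 hgauss.symm).resolve_left (by positivity)

end LineIntegral

section Fourier

variable {V F : Type*} [NormedAddCommGroup V] [InnerProductSpace ℝ V] [FiniteDimensional ℝ V]
  [MeasurableSpace V] [BorelSpace V] [NormedAddCommGroup F] [NormedSpace ℂ F] [CompleteSpace F]

theorem ae_eq_zero_of_fourier_eq_zero {g : V → F} (hg : Integrable g) (h : 𝓕 g = 0) :
    g =ᵐ[volume] 0 := by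
  refine ae_eq_zero_of_integral_contDiff_smul_eq_zero hg.locallyIntegrable fun u hu hu_supp ↦ ?_
  set φ : 𝓢(V, ℂ) := (hu_supp.comp_left Complex.ofReal_zero).toSchwartzMap
    (Complex.ofRealCLM.contDiff.comp hu)
  have hφ : ∀ x, φ x = u x := fun _ ↦ rfl
  -- `φ = 𝓕 ψ` and the Fourier transform is self-adjoint, so `∫ u • g = ∫ ψ • 𝓕 g = 0`.
  set ψ : 𝓢(V, ℂ) := 𝓕⁻ φ
  have hself := VectorFourier.integral_fourierIntegral_smul_eq_flip (L := innerₗ V)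
    Real.continuous_fourierChar continuous_inner (ψ.integrable (μ := volume)) hg
  rw [flip_innerₗ] at hself
  change ∫ ξ, 𝓕 (⇑ψ) ξ • g ξ = ∫ x, ψ x • 𝓕 g x at hself
  rw [← SchwartzMap.fourier_coe, FourierTransform.fourier_fourierInv_eq, h] at hself
  simpa [hφ, Complex.coe_smul] using hself

theorem fourier_eq_zero_of_lineIntegral_eq_zero {g : V → F} (hg : Integrable g) {θ ξ : V}
    (hθ : θ ≠ 0) (hθξ : ⟪θ, ξ⟫ = 0) (hline : ∀ x, ∫ t : ℝ, g (x + t • θ) = 0) : 𝓕 g ξ = 0 := by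
  rw [Real.fourier_eq]
  refine integral_eq_zero_of_lineIntegral_eq_zero hθ
    ((Real.fourierIntegral_convergent_iff ξ).2 hg) fun x ↦ ?_
  have hphase : ∀ t : ℝ, ⟪x + t • θ, ξ⟫ = ⟪x, ξ⟫ := by
    simp [inner_add_left, real_inner_smul_left, hθξ]
  simp_rw [hphase, Circle.smul_def, integral_smul, hline, smul_zero]

theorem ae_eq_zero_of_lineIntegral_eq_zero {g : V → F} (hg : Integrable g)
    (H : ∀ ξ : V, ∃ θ ≠ 0, ⟪θ, ξ⟫ = 0 ∧ ∀ x, ∫ t : ℝ, g (x + t • θ) = 0) :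
    g =ᵐ[volume] 0 :=
  ae_eq_zero_of_fourier_eq_zero hg <| funext fun ξ ↦
    let ⟨_, hθ, hθξ, hline⟩ := H ξ
    fourier_eq_zero_of_lineIntegral_eq_zero hg hθ hθξ hline

end Fourier

theorem exists_norm_eq_one_inner_eq_zero {E : Type*} [NormedAddCommGroup E]
    [InnerProductSpace ℝ E] [FiniteDimensional ℝ E] (hE : 2 ≤ Module.finrank ℝ E) (ξ : E) :
    ∃ θ : E, ‖θ‖ = 1 ∧ ⟪θ, ξ⟫ = 0 := by
  have hK : (ℝ ∙ ξ)ᗮ ≠ ⊥ := by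
    intro hbot
    have h := (ℝ ∙ ξ).finrank_add_finrank_orthogonal
    have h1 : Module.finrank ℝ (ℝ ∙ ξ) ≤ 1 := by simpa using finrank_span_le_card ({ξ} : Set E)
    rw [hbot, finrank_bot] at h
    omega
  obtain ⟨v, hv, hv0⟩ := Submodule.exists_mem_ne_zero_of_ne_bot hK
  refine ⟨‖v‖⁻¹ • v, norm_smul_inv_norm hv0, ?_⟩
  rw [real_inner_smul_left,
    Submodule.inner_left_of_mem_orthogonal (Submodule.mem_span_singleton_self ξ) hv, mul_zero]

theorem ae_eq_zero_of_lightRay_eq_zero {U W : Type*}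
    [NormedAddCommGroup U] [InnerProductSpace ℝ U] [FiniteDimensional ℝ U]
    [MeasurableSpace U] [BorelSpace U]
    [NormedAddCommGroup W] [InnerProductSpace ℝ W] [FiniteDimensional ℝ W]
    [MeasurableSpace W] [BorelSpace W]
    (hU : 2 ≤ Module.finrank ℝ U) (hW : 2 ≤ Module.finrank ℝ W) {f : U × W → ℝ}
    (hf : Integrable f)
    (hL : ∀ x θ : U × W, ‖θ.1‖ = 1 → ‖θ.2‖ = 1 → ∫ t : ℝ, f (x + t • θ) = 0) :
    f =ᵐ[volume] 0 := by
  -- `U × W` carries the sup norm; the Fourier transform needs the Euclidean product.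
  set g : WithLp 2 (U × W) → ℂ := fun x ↦ (f (WithLp.ofLp x) : ℂ)
  have hg : Integrable g :=
    (((WithLp.volume_preserving_ofLp U W).integrable_comp hf.aestronglyMeasurable).2 hf).ofReal
  have hg0 : g =ᵐ[volume] 0 := by
    refine ae_eq_zero_of_lineIntegral_eq_zero hg fun ξ ↦ ?_
    obtain ⟨θ₁, hθ₁, hθ₁ξ⟩ := exists_norm_eq_one_inner_eq_zero hU ξ.fst
    obtain ⟨θ₂, hθ₂, hθ₂ξ⟩ := exists_norm_eq_one_inner_eq_zero hW ξ.snd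
    refine ⟨WithLp.toLp 2 (θ₁, θ₂), ?_, by simp [hθ₁ξ, hθ₂ξ], fun x ↦ ?_⟩
    · intro h
      have : θ₁ = 0 := congrArg (fun v ↦ (WithLp.ofLp v).1) h
      simp [this] at hθ₁
    · simp only [g, WithLp.ofLp_add, WithLp.ofLp_smul]
      rw [integral_complex_ofReal, hL _ _ hθ₁ hθ₂, Complex.ofReal_zero]
  filter_upwards [(WithLp.volume_preserving_toLp U W).quasiMeasurePreserving.ae_eq_comp hg0]
    with x hx
  simpa [g] using hx

/-- If `f ∈ L¹(ℝⁿ)` (`n = n' + n''`, `n', n'' ≥ 2`) and the light ray transform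
`Lf(x,θ) = ∫ f(x+tθ) dt` vanishes for every `x` and every `θ = (θ',θ'')` with
`|θ'| = |θ''| = 1`, then `f = 0` almost everywhere. -/
theorem stmt1 (n' n'' : ℕ) (hn' : 2 ≤ n') (hn'' : 2 ≤ n'')
    (f : EuclideanSpace ℝ (Fin n') × EuclideanSpace ℝ (Fin n'') → ℝ)
    (hf : Integrable f)
    (hL : ∀ (x θ : EuclideanSpace ℝ (Fin n') × EuclideanSpace ℝ (Fin n'')),
      ‖θ.1‖ = 1 → ‖θ.2‖ = 1 → ∫ t : ℝ, f (x + t • θ) = 0) :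
    f =ᵐ[volume] 0 :=
  ae_eq_zero_of_lightRay_eq_zero (by simpa using hn') (by simpa using hn'') hf hL
end

section
/- Let a, b, c be real with c > 0 not a nonpositive integer and c - a - b > 0. Then the hypergeometric series ₂F₁(a,b;c;z) = Σ_{k≥0} (a)_k(b)_k z^k / ((c)_k k!) converges absolutely for |z| ≤ 1, and ₂F₁(a,b;c;1) = Γ(c)Γ(c-a-b)/(Γ(c-a)Γ(c-b)) (Gauss's theorem). -/
/-!
Writing `T c k` for the `k`-th term of `₂F₁(a, b; c; 1)`, the ratio `T c (k + 1) / T c k` is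
eventually at most `1 - r / (k + 1)` for some `r > 1` as soon as `c - a - b > 0`, so by Raabe's
test `T c k = O(k ^ (-r))` and the series converges absolutely on `|z| ≤ 1`.

For Gauss's formula, the contiguous relation
`c (c - a - b) F(c) = (c - a) (c - b) F(c + 1)` between `F(c) = ∑ T c k` and `F(c + 1)` holds
because the difference of the two series telescopes and `k T c k → 0`. Iterating it,
`F(c) = ∏_{n < m} (c - a + n) (c - b + n) / ((c + n) (c - a - b + n)) * F(c + m)`.
As `m → ∞`, `F(c + m) → 1` by dominated convergence, while the product is a ratio of
Euler's sequences `GammaSeq` and so tends to `Γ(c) Γ(c - a - b) / (Γ(c - a) Γ(c - b))`.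
-/

open Filter Topology Finset Asymptotics

theorem ascPochhammer_eval_succ_left {S : Type*} [CommSemiring S] (n : ℕ) (x : S) :
    (ascPochhammer S (n + 1)).eval x = x * (ascPochhammer S n).eval (x + 1) := by
  simp [ascPochhammer_succ_left]

theorem ascPochhammer_eval_le_eval {S : Type*} [CommSemiring S] [PartialOrder S]
    [IsStrictOrderedRing S] {x y : S} (hx : 0 < x) (hxy : x ≤ y) (n : ℕ) :
    (ascPochhammer S n).eval x ≤ (ascPochhammer S n).eval y := by
  induction n with
  | zero => simp
  | succ n ih =>
    simp only [ascPochhammer_succ_eval]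
    exact mul_le_mul ih (add_le_add_left hxy _) (add_nonneg hx.le n.cast_nonneg)
      (ascPochhammer_pos n y (hx.trans_le hxy)).le

theorem tendsto_ascPochhammer_eval_atTop {n : ℕ} (hn : n ≠ 0) :
    Tendsto (fun x : ℝ => (ascPochhammer ℝ n).eval x) atTop atTop :=
  Polynomial.tendsto_atTop_of_leadingCoeff_nonneg _
    (Polynomial.natDegree_pos_iff_degree_pos.mp <| by
      rwa [ascPochhammer_natDegree, Nat.pos_iff_ne_zero])
    (by rw [(monic_ascPochhammer ℝ n).leadingCoeff]; exact zero_le_one)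

/-- Raabe's test. By Bernoulli's inequality `|t k| * k ^ r` is eventually antitone. -/
theorem isBigO_rpow_neg_of_abs_succ_le {t : ℕ → ℝ} {r : ℝ} (hr : 1 ≤ r)
    (h : ∀ᶠ k : ℕ in atTop, |t (k + 1)| ≤ (1 - r / (k + 1)) * |t k|) :
    t =O[atTop] fun k => (k : ℝ) ^ (-r) := by
  obtain ⟨N, hN⟩ := eventually_atTop.mp (h.and (eventually_ge_atTop 1))
  have hstep : ∀ k ≥ N, |t (k + 1)| * ((k + 1 : ℕ) : ℝ) ^ r ≤ |t k| * (k : ℝ) ^ r := by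
    intro k hk
    obtain ⟨hk_ratio, hk1⟩ := hN k hk
    have hk0 : (0 : ℝ) < k := by exact_mod_cast hk1
    have hbern : 1 - r / (k + 1) ≤ ((k : ℝ) / (k + 1)) ^ r := by
      have := one_add_mul_self_le_rpow_one_add (s := -(1 / ((k : ℝ) + 1)))
        (by rw [neg_le_neg_iff]; exact div_le_one_of_le₀ (by linarith) (by positivity)) hr
      convert this using 2 <;> field_simp <;> ring
    calc |t (k + 1)| * ((k + 1 : ℕ) : ℝ) ^ r
        ≤ (1 - r / (k + 1)) * |t k| * ((k : ℝ) + 1) ^ r := by push_cast; gcongr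
      _ ≤ ((k : ℝ) / (k + 1)) ^ r * |t k| * ((k : ℝ) + 1) ^ r := by gcongr
      _ = |t k| * (k : ℝ) ^ r := by
        rw [Real.div_rpow hk0.le (by positivity)]
        field_simp
  have hmono : ∀ k ≥ N, |t k| * (k : ℝ) ^ r ≤ |t N| * (N : ℝ) ^ r := by
    intro k hk
    induction k, hk using Nat.le_induction with
    | base => rfl
    | succ k hk ih => exact (hstep k hk).trans ih
  refine IsBigO.of_bound (|t N| * (N : ℝ) ^ r) ?_
  filter_upwards [eventually_ge_atTop N, eventually_ge_atTop 1] with k hk hk1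
  have hk0 : (0 : ℝ) < k := by exact_mod_cast hk1
  rw [Real.norm_eq_abs, Real.norm_of_nonneg (by positivity), Real.rpow_neg hk0.le,
    ← div_eq_mul_inv, le_div_iff₀ (by positivity)]
  exact hmono k hk

section Coefficient

variable {a b c : ℝ}

theorem ordinaryHypergeometricCoefficient_succ (k : ℕ) :
    ordinaryHypergeometricCoefficient a b c (k + 1) =
      ordinaryHypergeometricCoefficient a b c k * ((a + k) * (b + k) / ((c + k) * (k + 1))) := by
  simp only [ordinaryHypergeometricCoefficient, ascPochhammer_succ_eval, Nat.factorial_succ,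
    Nat.cast_mul, Nat.cast_succ, div_eq_mul_inv, mul_inv]
  ring

theorem ordinaryHypergeometricCoefficient_add_one (hc : c ≠ 0) (k : ℕ) :
    ordinaryHypergeometricCoefficient a b (c + 1) k =
      ordinaryHypergeometricCoefficient a b c k * (c / (c + k)) := by
  have hshift : (ascPochhammer ℝ k).eval (c + 1) = (ascPochhammer ℝ k).eval c * (c + k) / c := by
    rw [← ascPochhammer_succ_eval, ascPochhammer_eval_succ_left, mul_div_cancel_left₀ _ hc]
  simp only [ordinaryHypergeometricCoefficient, hshift, div_eq_mul_inv, mul_inv, inv_inv]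
  ring

theorem isBigO_ordinaryHypergeometricCoefficient (hcab : 0 < c - a - b) :
    ∃ r : ℝ, 1 < r ∧
      ordinaryHypergeometricCoefficient a b c =O[atTop] fun k => (k : ℝ) ^ (-r) := by
  set r := 1 + (c - a - b) / 2 with hr
  refine ⟨r, by linarith, isBigO_rpow_neg_of_abs_succ_le (by linarith) ?_⟩
  have hk : Tendsto (fun k : ℕ => (k : ℝ)) atTop atTop := tendsto_natCast_atTop_atTop
  have hgap : Tendsto (fun k : ℕ => (c - a - b) / 2 * k + (c * (1 - r) - a * b)) atTop atTop :=
    tendsto_atTop_add_const_right _ _ (hk.const_mul_atTop (by linarith))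
  filter_upwards [hgap.eventually_ge_atTop 0,
    (tendsto_atTop_add_const_left _ a hk).eventually_gt_atTop 0,
    (tendsto_atTop_add_const_left _ b hk).eventually_gt_atTop 0,
    (tendsto_atTop_add_const_left _ c hk).eventually_gt_atTop 0] with k hgapk ha hb hc
  have hratio : (a + k) * (b + k) / ((c + k) * (k + 1)) ≤ 1 - r / (k + 1) := by
    have hgap_eq : (k + 1 - r) * (c + k) - (a + k) * (b + k) =
        (c - a - b) / 2 * k + (c * (1 - r) - a * b) := by
      rw [hr]; ring
    rw [div_le_iff₀ (by positivity)]
    field_simp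
    linarith
  rw [ordinaryHypergeometricCoefficient_succ, abs_mul,
    abs_of_nonneg (a := (a + k) * (b + k) / ((c + k) * (k + 1))) (by positivity), mul_comm]
  gcongr

theorem summable_abs_ordinaryHypergeometricCoefficient (hcab : 0 < c - a - b) :
    Summable fun k => |ordinaryHypergeometricCoefficient a b c k| := by
  obtain ⟨r, hr, hO⟩ := isBigO_ordinaryHypergeometricCoefficient hcab
  exact (summable_of_isBigO_nat (Real.summable_nat_rpow.mpr (by linarith)) hO).abs

theorem tendsto_mul_ordinaryHypergeometricCoefficient (hcab : 0 < c - a - b) :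
    Tendsto (fun k : ℕ => k * ordinaryHypergeometricCoefficient a b c k) atTop (𝓝 0) := by
  obtain ⟨r, hr, hO⟩ := isBigO_ordinaryHypergeometricCoefficient hcab
  refine ((isBigO_refl (fun k : ℕ => (k : ℝ)) atTop).mul hO).trans_tendsto ?_
  have hpow : Tendsto (fun k : ℕ => (k : ℝ) ^ (-(r - 1))) atTop (𝓝 0) :=
    (tendsto_rpow_neg_atTop (by linarith)).comp tendsto_natCast_atTop_atTop
  refine hpow.congr' ?_
  filter_upwards [eventually_ge_atTop 1] with k hk
  rw [neg_sub, Real.rpow_sub (by positivity), Real.rpow_one, Real.rpow_neg (by positivity)]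
  ring

theorem ordinaryHypergeometricCoefficient_contiguous (hc : 0 < c) (k : ℕ) :
    c * (c - a - b) * ordinaryHypergeometricCoefficient a b c k -
        (c - a) * (c - b) * ordinaryHypergeometricCoefficient a b (c + 1) k =
      c * (k * ordinaryHypergeometricCoefficient a b c k) -
        c * ((k + 1 : ℕ) * ordinaryHypergeometricCoefficient a b c (k + 1)) := by
  have hck : c + k ≠ 0 := by positivity
  rw [ordinaryHypergeometricCoefficient_add_one hc.ne', ordinaryHypergeometricCoefficient_succ]
  push_cast
  field_simp
  ring

theorem tsum_ordinaryHypergeometricCoefficient_eq_mul_add_one (hc : 0 < c)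
    (hcab : 0 < c - a - b) :
    ∑' k, ordinaryHypergeometricCoefficient a b c k =
      (c - a) * (c - b) / (c * (c - a - b)) *
        ∑' k, ordinaryHypergeometricCoefficient a b (c + 1) k := by
  have hsum := (summable_abs_ordinaryHypergeometricCoefficient hcab).of_abs
  have hsum₁ := (summable_abs_ordinaryHypergeometricCoefficient
    (show 0 < c + 1 - a - b by linarith)).of_abs
  have hg : Tendsto (fun n : ℕ => c * (n * ordinaryHypergeometricCoefficient a b c n)) atTop
      (𝓝 0) := by
    simpa using (tendsto_mul_ordinaryHypergeometricCoefficient hcab).const_mul c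
  have hpartial (n : ℕ) :
      ∑ k ∈ range n, (c * (c - a - b) * ordinaryHypergeometricCoefficient a b c k -
        (c - a) * (c - b) * ordinaryHypergeometricCoefficient a b (c + 1) k) =
      -(c * (n * ordinaryHypergeometricCoefficient a b c n)) := by
    simp_rw [ordinaryHypergeometricCoefficient_contiguous hc]
    rw [sum_range_sub' (fun k : ℕ => c * (k * ordinaryHypergeometricCoefficient a b c k))]
    simp
  have hu := (hsum.mul_left (c * (c - a - b))).sub (hsum₁.mul_left ((c - a) * (c - b)))
  have htsum := tendsto_nhds_unique hu.hasSum.tendsto_sum_nat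
    (by simpa only [hpartial, neg_zero] using hg.neg)
  rw [(hsum.mul_left _).tsum_sub (hsum₁.mul_left _), tsum_mul_left, tsum_mul_left] at htsum
  have hccab : c * (c - a - b) ≠ 0 := by positivity
  field_simp
  linarith

theorem tsum_ordinaryHypergeometricCoefficient_eq_prod_mul_add_nat (hc : 0 < c)
    (hcab : 0 < c - a - b) (m : ℕ) :
    ∑' k, ordinaryHypergeometricCoefficient a b c k =
      (∏ n ∈ range m, (c - a + n) * (c - b + n)) / (∏ n ∈ range m, (c + n) * (c - a - b + n)) *
        ∑' k, ordinaryHypergeometricCoefficient a b (c + m) k := by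
  induction m with
  | zero => simp
  | succ m ih =>
    rw [ih, tsum_ordinaryHypergeometricCoefficient_eq_mul_add_one (c := c + m) (by positivity)
      (by linarith), prod_range_succ, prod_range_succ, Nat.cast_succ, ← add_assoc, ← mul_assoc,
      div_mul_div_comm]
    simp only [add_sub_right_comm _ (m : ℝ)]

theorem abs_ordinaryHypergeometricCoefficient_le_of_le {c' : ℝ} (hc : 0 < c) (hcc' : c ≤ c')
    (k : ℕ) :
    |ordinaryHypergeometricCoefficient a b c' k| ≤ |ordinaryHypergeometricCoefficient a b c k| := by
  simp only [ordinaryHypergeometricCoefficient, abs_mul, abs_inv,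
    abs_of_pos (ascPochhammer_pos k _ hc), abs_of_pos (ascPochhammer_pos k _ (hc.trans_le hcc'))]
  gcongr
  exacts [ascPochhammer_pos k _ hc, ascPochhammer_eval_le_eval hc hcc' k]

theorem tendsto_ordinaryHypergeometricCoefficient_add_nat (k : ℕ) :
    Tendsto (fun m : ℕ => ordinaryHypergeometricCoefficient a b (c + m) k) atTop
      (𝓝 (if k = 0 then 1 else 0)) := by
  rcases eq_or_ne k 0 with rfl | hk
  · simp [ordinaryHypergeometricCoefficient]
  have hpoch : Tendsto (fun m : ℕ => ((ascPochhammer ℝ k).eval (c + m))⁻¹) atTop (𝓝 0) :=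
    tendsto_inv_atTop_zero.comp <| (tendsto_ascPochhammer_eval_atTop hk).comp <|
      tendsto_atTop_add_const_left _ c tendsto_natCast_atTop_atTop
  simpa [hk] using hpoch.const_mul
    ((k.factorial : ℝ)⁻¹ * (ascPochhammer ℝ k).eval a * (ascPochhammer ℝ k).eval b)

theorem tendsto_tsum_ordinaryHypergeometricCoefficient_add_nat (hc : 0 < c)
    (hcab : 0 < c - a - b) :
    Tendsto (fun m : ℕ => ∑' k, ordinaryHypergeometricCoefficient a b (c + m) k) atTop (𝓝 1) := by
  have hlim := tendsto_tsum_of_dominated_convergence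
    (summable_abs_ordinaryHypergeometricCoefficient (show 0 < c + 1 - a - b by linarith))
    tendsto_ordinaryHypergeometricCoefficient_add_nat <| by
      filter_upwards [eventually_ge_atTop 1] with m hm k
      exact abs_ordinaryHypergeometricCoefficient_le_of_le (by linarith)
        (by gcongr; exact_mod_cast hm) k
  rwa [tsum_ite_eq] at hlim

end Coefficient

/-- Euler's limit formula: the products are ratios of `GammaSeq`s, whose powers of `n` cancel
because `s + t = u + v`. -/
theorem tendsto_prod_div_prod_Gamma {s t u v : ℝ} (hstuv : s + t = u + v) (hu : ∀ m : ℕ, u ≠ -m)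
    (hv : ∀ m : ℕ, v ≠ -m) :
    Tendsto (fun m => (∏ n ∈ range m, (u + n) * (v + n)) / ∏ n ∈ range m, (s + n) * (t + n))
      atTop (𝓝 (Real.Gamma s * Real.Gamma t / (Real.Gamma u * Real.Gamma v))) := by
  have hGammaSeq : ∀ n ≥ 1, Real.GammaSeq s n * Real.GammaSeq t n /
      (Real.GammaSeq u n * Real.GammaSeq v n) =
      (∏ j ∈ range (n + 1), (u + j) * (v + j)) / ∏ j ∈ range (n + 1), (s + j) * (t + j) := by
    intro n hn
    have hn0 : (0 : ℝ) < n := by exact_mod_cast hn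
    have hpow : (n : ℝ) ^ s * (n : ℝ) ^ t = (n : ℝ) ^ u * (n : ℝ) ^ v := by
      rw [← Real.rpow_add hn0, ← Real.rpow_add hn0, hstuv]
    simp only [Real.GammaSeq, prod_mul_distrib, div_mul_div_comm]
    rw [mul_mul_mul_comm, hpow, mul_mul_mul_comm _ (n.factorial : ℝ)]
    exact div_div_div_cancel_left' _ _ (by positivity)
  rw [← tendsto_add_atTop_iff_nat 1]
  refine (((Real.GammaSeq_tendsto_Gamma s).mul (Real.GammaSeq_tendsto_Gamma t)).div
    ((Real.GammaSeq_tendsto_Gamma u).mul (Real.GammaSeq_tendsto_Gamma v))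
    (mul_ne_zero (Real.Gamma_ne_zero hu) (Real.Gamma_ne_zero hv))).congr' ?_
  filter_upwards [eventually_ge_atTop 1] with n hn
  exact hGammaSeq n hn

theorem div_mul_factorial_eq_ordinaryHypergeometricCoefficient (a b c : ℝ) (k : ℕ) :
    (ascPochhammer ℝ k).eval a * (ascPochhammer ℝ k).eval b /
        ((ascPochhammer ℝ k).eval c * (k.factorial : ℝ)) =
      ordinaryHypergeometricCoefficient a b c k := by
  rw [ordinaryHypergeometricCoefficient, div_eq_mul_inv, mul_inv]
  ring

/-- Gauss's theorem: for real `a, b, c` with `c > 0`, `c - a - b > 0`, and `c-a`, `c-b`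
not nonpositive integers, the hypergeometric series `₂F₁(a,b;c;z) = Σ (a)_k(b)_k z^k/((c)_k k!)`
converges absolutely for `|z| ≤ 1` and `₂F₁(a,b;c;1) = Γ(c)Γ(c-a-b)/(Γ(c-a)Γ(c-b))`. -/
theorem stmt17 (a b c : ℝ) (hc : 0 < c) (hcab : 0 < c - a - b)
    (hca : ∀ m : ℕ, c - a ≠ -(m : ℝ)) (hcb : ∀ m : ℕ, c - b ≠ -(m : ℝ)) :
    (∀ z : ℝ, |z| ≤ 1 → Summable fun k : ℕ =>
      |(ascPochhammer ℝ k).eval a * (ascPochhammer ℝ k).eval b /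
        ((ascPochhammer ℝ k).eval c * (k.factorial : ℝ)) * z ^ k|) ∧
    (∑' k : ℕ, (ascPochhammer ℝ k).eval a * (ascPochhammer ℝ k).eval b /
        ((ascPochhammer ℝ k).eval c * (k.factorial : ℝ)))
      = Real.Gamma c * Real.Gamma (c - a - b) / (Real.Gamma (c - a) * Real.Gamma (c - b)) := by
  simp only [div_mul_factorial_eq_ordinaryHypergeometricCoefficient]
  refine ⟨fun z hz => ?_, ?_⟩
  · refine (summable_abs_ordinaryHypergeometricCoefficient hcab).of_nonneg_of_le
      (fun _ => abs_nonneg _) fun k => ?_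
    rw [abs_mul, abs_pow]
    exact mul_le_of_le_one_right (abs_nonneg _) (pow_le_one₀ (abs_nonneg z) hz)
  · have hlim := (tendsto_prod_div_prod_Gamma (s := c) (t := c - a - b) (by ring) hca hcb).mul
      (tendsto_tsum_ordinaryHypergeometricCoefficient_add_nat hc hcab)
    rw [mul_one] at hlim
    exact tendsto_nhds_unique (tendsto_const_nhds.congr
      (tsum_ordinaryHypergeometricCoefficient_eq_prod_mul_add_nat hc hcab)) hlim
end
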